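/- arXiv:2507.05905 — 4 statements merged into one kernel-verified Lean document; each statement's English description precedes it below -/
import Mathlib

section
/- For every nonzero integer n, the set of pairs (v₁, v₂) of primitive vectors in ℤ² with det(v₁, v₂) = n is the disjoint union, over ℓ with 1 ≤ ℓ ≤ |n| and gcd(ℓ, n) = 1, of the SL₂(ℤ)-orbits of the matrices with columns (1,0) and (ℓ, n). -/
/-!
Every pair of primitive columns with determinant `n` is reduced by `SL₂(ℤ)` in two moves: a matrix
of `SL₂(ℤ)` whose first column is the (primitive) first column `v₁` sends `e₁` to `v₁`, so its
inverse brings the pair to the upper triangular form `[[1, b], [0, n]]`; the unipotent matrices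
`Tᵏ` then change `b` by multiples of `n`, which brings it into `[1, |n|]`. The primitivity of the
second column, which `SL₂(ℤ)` preserves, is `gcd(ℓ, n) = 1`. Conversely, an element of `SL₂` that
maps `[[1, ℓ₁], [0, n]]` to `[[1, ℓ₂], [0, n]]` fixes `e₁`, hence has top row `(1, t)`, and then
`ℓ₂ = ℓ₁ + t n`; so distinct representatives in `[1, |n|]` give disjoint orbits.
-/

open Matrix MatrixGroups ModularGroup

namespace Matrix.SpecialLinearGroup

variable {R : Type*} [CommRing R]

lemma isCoprime_mul_apply_iff (γ : SL(2, R)) (A : Matrix (Fin 2) (Fin 2) R) (j : Fin 2) :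
    IsCoprime (((γ : Matrix (Fin 2) (Fin 2) R) * A) 0 j)
        (((γ : Matrix (Fin 2) (Fin 2) R) * A) 1 j) ↔
      IsCoprime (A 0 j) (A 1 j) := by
  have mul_col (g : SL(2, R)) (B : Matrix (Fin 2) (Fin 2) R) (h : IsCoprime (B 0 j) (B 1 j)) :
      IsCoprime (((g : Matrix (Fin 2) (Fin 2) R) * B) 0 j)
        (((g : Matrix (Fin 2) (Fin 2) R) * B) 1 j) :=
    IsCoprime.mulVecSL (v := fun i => B i j) h g
  refine ⟨fun h => ?_, mul_col γ A⟩
  simpa only [← Matrix.mul_assoc, ← coe_mul, inv_mul_cancel, coe_one, Matrix.one_mul] using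
    mul_col γ⁻¹ _ h

lemma exists_eq_mul_of_isCoprime {A : Matrix (Fin 2) (Fin 2) R} (h : IsCoprime (A 0 0) (A 1 0)) :
    ∃ (γ : SL(2, R)) (b : R), A = (γ : Matrix (Fin 2) (Fin 2) R) * !![1, b; 0, A.det] := by
  obtain ⟨p, q, hpq⟩ := h
  refine ⟨⟨!![A 0 0, -q; A 1 0, p], by rw [det_fin_two_of]; linear_combination hpq⟩,
    p * A 0 1 + q * A 1 1, ?_⟩
  ext i j
  fin_cases i <;> fin_cases j <;>
    simp only [Fin.zero_eta, Fin.mk_one, Fin.isValue, det_fin_two, mul_apply, of_apply, cons_val',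
      cons_val_fin_one, cons_val_zero, cons_val_one, Fin.sum_univ_two, mul_one, mul_zero, add_zero]
  · linear_combination (-A 0 1) * hpq
  · linear_combination (-A 1 1) * hpq

lemma _root_.Matrix.dvd_sub_of_mul_eq (γ : Matrix (Fin 2) (Fin 2) R) {a b n : R}
    (h : γ * !![1, a; 0, n] = !![1, b; 0, n]) : n ∣ b - a := by
  have h00 := congrFun (congrFun h 0) 0
  have h01 := congrFun (congrFun h 0) 1
  simp only [mul_apply, Fin.sum_univ_two, of_apply, cons_val', cons_val_zero, cons_val_one,
    empty_val', cons_val_fin_one, mul_one, mul_zero, add_zero] at h00 h01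
  exact ⟨γ 0 1, by linear_combination -h01 + a * h00⟩

lemma dvd_sub_of_mul_eq_mul (γ₁ γ₂ : SL(2, R)) {a b n : R}
    (h : (γ₁ : Matrix (Fin 2) (Fin 2) R) * !![1, a; 0, n] =
      (γ₂ : Matrix (Fin 2) (Fin 2) R) * !![1, b; 0, n]) :
    n ∣ b - a :=
  dvd_sub_of_mul_eq ((γ₂⁻¹ * γ₁ : SL(2, R)) : Matrix (Fin 2) (Fin 2) R) <| by
    rw [coe_mul, Matrix.mul_assoc, h, ← Matrix.mul_assoc, ← coe_mul, inv_mul_cancel, coe_one,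
      Matrix.one_mul]

end Matrix.SpecialLinearGroup

lemma ModularGroup.coe_T_zpow_mul (k b n : ℤ) :
    ((T ^ k : SL(2, ℤ)) : Matrix (Fin 2) (Fin 2) ℤ) * !![1, b; 0, n] = !![1, b + k * n; 0, n] := by
  rw [coe_T_zpow, mul_fin_two]
  simp [add_comm]

namespace Int

lemma exists_mem_Icc_one_abs_dvd_sub (b : ℤ) {n : ℤ} (hn : n ≠ 0) :
    ∃ ℓ ∈ Set.Icc 1 |n|, n ∣ b - ℓ := by
  have hp : 0 < |n| := abs_pos.mpr hn
  obtain ⟨hpos, hle⟩ := toIocMod_mem_Ioc hp 0 b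
  refine ⟨toIocMod hp 0 b, ⟨hpos, by simpa using hle⟩, ?_⟩
  rw [← self_sub_toIocDiv_zsmul, sub_sub_cancel, zsmul_eq_mul]
  exact (self_dvd_abs n).mul_left _

lemma eq_of_mem_Icc_one_abs_of_dvd_sub {a b n : ℤ} (ha : a ∈ Set.Icc 1 |n|)
    (hb : b ∈ Set.Icc 1 |n|) (h : n ∣ a - b) : a = b :=
  sub_eq_zero.mp <| eq_zero_of_abs_lt_dvd ((abs_dvd n _).mpr h) <| by
    rw [abs_sub_lt_iff]; constructor <;> linarith [ha.1, ha.2, hb.1, hb.2]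

end Int

/-- For `n ≠ 0`, the set of `2×2` integer matrices with both columns primitive and
determinant `n` is the disjoint union over `1 ≤ ℓ ≤ |n|`, `gcd(ℓ, n) = 1`, of the
`SL₂(ℤ)`-orbits of `[[1, ℓ], [0, n]]`. -/
theorem stmt9 (n : ℤ) (hn : n ≠ 0) :
    ({A : Matrix (Fin 2) (Fin 2) ℤ |
        Int.gcd (A 0 0) (A 1 0) = 1 ∧ Int.gcd (A 0 1) (A 1 1) = 1 ∧ A.det = n}
      = ⋃ ℓ ∈ {ℓ : ℤ | 1 ≤ ℓ ∧ ℓ ≤ |n| ∧ Int.gcd ℓ n = 1},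
        {A : Matrix (Fin 2) (Fin 2) ℤ |
          ∃ γ : Matrix.SpecialLinearGroup (Fin 2) ℤ,
            A = (γ : Matrix (Fin 2) (Fin 2) ℤ) * !![1, ℓ; 0, n]}) ∧
    (∀ ℓ₁ ∈ {ℓ : ℤ | 1 ≤ ℓ ∧ ℓ ≤ |n| ∧ Int.gcd ℓ n = 1},
      ∀ ℓ₂ ∈ {ℓ : ℤ | 1 ≤ ℓ ∧ ℓ ≤ |n| ∧ Int.gcd ℓ n = 1}, ℓ₁ ≠ ℓ₂ →
        Disjoint
          {A : Matrix (Fin 2) (Fin 2) ℤ |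
            ∃ γ : Matrix.SpecialLinearGroup (Fin 2) ℤ,
              A = (γ : Matrix (Fin 2) (Fin 2) ℤ) * !![1, ℓ₁; 0, n]}
          {A : Matrix (Fin 2) (Fin 2) ℤ |
            ∃ γ : Matrix.SpecialLinearGroup (Fin 2) ℤ,
              A = (γ : Matrix (Fin 2) (Fin 2) ℤ) * !![1, ℓ₂; 0, n]}) := by
  simp only [← Int.isCoprime_iff_gcd_eq_one]
  refine ⟨Set.ext fun A => ⟨?_, ?_⟩, ?_⟩
  · rintro ⟨h₀, h₁, hdet⟩
    obtain ⟨γ, b, hA⟩ := SpecialLinearGroup.exists_eq_mul_of_isCoprime h₀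
    obtain ⟨ℓ, hℓ, k, hk⟩ := Int.exists_mem_Icc_one_abs_dvd_sub b hn
    obtain ⟨γ', hA'⟩ : ∃ γ' : SL(2, ℤ), A = (γ' : Matrix (Fin 2) (Fin 2) ℤ) * !![1, ℓ; 0, n] := by
      refine ⟨γ * T ^ k, ?_⟩
      rw [Matrix.SpecialLinearGroup.coe_mul, Matrix.mul_assoc, coe_T_zpow_mul, hA, hdet,
        show b = ℓ + k * n by linear_combination hk]
    rw [hA', SpecialLinearGroup.isCoprime_mul_apply_iff] at h₁
    exact Set.mem_biUnion ⟨hℓ.1, hℓ.2, by simpa using h₁⟩ ⟨γ', hA'⟩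
  · simp only [Set.mem_iUnion₂]
    rintro ⟨ℓ, ⟨-, -, hℓ⟩, γ, rfl⟩
    simp [SpecialLinearGroup.isCoprime_mul_apply_iff, hℓ, isCoprime_one_left]
  · rintro ℓ₁ ⟨h₁, h₁', -⟩ ℓ₂ ⟨h₂, h₂', -⟩ hne
    refine Set.disjoint_left.2 ?_
    rintro A ⟨γ₁, rfl⟩ ⟨γ₂, h⟩
    exact hne (Int.eq_of_mem_Icc_one_abs_of_dvd_sub ⟨h₂, h₂'⟩ ⟨h₁, h₁'⟩
      (SpecialLinearGroup.dvd_sub_of_mul_eq_mul γ₁ γ₂ h)).symm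
end

section
/- Let N ≥ 2 and fix a congruence class v₀ ∈ ℤ² with gcd(v₀, N) = 1. For n a nonzero multiple of N, the set D_n = {(v₁, v₂) : v₁, v₂ primitive in ℤ², v₁ ≡ v₂ ≡ v₀ (mod N), det(v₁,v₂) = n} decomposes into exactly N·φ(n)/φ(N) orbits under the principal congruence subgroup Γ(N). -/
open Matrix

/-- The set of pairs `(v₁, v₂)` of primitive vectors, both congruent to `v₀` mod `N`,
with `det(v₁, v₂) = n`, encoded as `2×2` matrices with columns `v₁, v₂`. -/
def Dset (N : ℕ) (v₀ : Fin 2 → ℤ) (n : ℤ) : Set (Matrix (Fin 2) (Fin 2) ℤ) :=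
  {A | Int.gcd (A 0 0) (A 1 0) = 1 ∧ Int.gcd (A 0 1) (A 1 1) = 1 ∧
    (∀ i, A i 0 ≡ v₀ i [ZMOD (N : ℤ)]) ∧ (∀ i, A i 1 ≡ v₀ i [ZMOD (N : ℤ)]) ∧
    A.det = n}

/-- The relation identifying two elements in the same `Γ(N)`-orbit. -/
def gammaRel (N : ℕ) (v₀ : Fin 2 → ℤ) (n : ℤ) :
    Dset N v₀ n → Dset N v₀ n → Prop :=
  fun A B => ∃ γ : Matrix.SpecialLinearGroup (Fin 2) ℤ, γ ∈ CongruenceSubgroup.Gamma N ∧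
    (B : Matrix (Fin 2) (Fin 2) ℤ) = (γ : Matrix (Fin 2) (Fin 2) ℤ) * (A : Matrix (Fin 2) (Fin 2) ℤ)

/-
Choose `h ∈ SL₂(ℤ)` whose first column is a primitive lift of `v₀`. Since `Γ(N)` is normal,
`A ↦ h A` identifies the `Γ(N)`-orbits on `D_n` for `v₀ = e₁ = (1, 0)` with those for `v₀`.
There, `Γ(N)` moves every primitive `v ≡ e₁` to `e₁`, so each orbit contains a matrix
`[[1, x], [0, n]]` with `x ≡ 1 (mod N)` and `gcd(x, n) = 1`, and two of these are in the same
orbit iff `x ≡ y (mod Nn)`: the stabiliser of `e₁` in `Γ(N)` is `{[[1, Nk], [0, 1]]}`. The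
orbits are thus in bijection with the kernel of `(ℤ/Nn)ˣ → (ℤ/N)ˣ`, of order
`φ(N|n|)/φ(N) = N φ(|n|)/φ(N)`.
-/

open CongruenceSubgroup
open scoped MatrixGroups Nat

local notation "M₂" => Matrix (Fin 2) (Fin 2) ℤ

theorem Int.ModEq.mulVec {ι κ : Type*} [Fintype κ] {N : ℤ} (M : Matrix ι κ ℤ) {v w : κ → ℤ}
    (h : ∀ j, v j ≡ w j [ZMOD N]) (i : ι) : (M *ᵥ v) i ≡ (M *ᵥ w) i [ZMOD N] :=
  Int.ModEq.sum fun j _ => (h j).mul_left _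

theorem Int.isCoprime_of_modEq_one {x : ℤ} {N : ℕ} (hx : x ≡ 1 [ZMOD N]) : IsCoprime x N := by
  refine ((ZMod.coe_int_isUnit_iff_isCoprime x N).mp ?_).symm
  rw [(ZMod.intCast_eq_intCast_iff x 1 N).mpr hx, Int.cast_one]
  exact isUnit_one

theorem Int.isCoprime_natCast_mul_natAbs_iff {x n : ℤ} {N : ℕ} :
    IsCoprime x ((N * n.natAbs : ℕ) : ℤ) ↔ IsCoprime x N ∧ IsCoprime x n := by
  rw [Nat.cast_mul, Int.natCast_natAbs, IsCoprime.mul_right_iff, IsCoprime.abs_right_iff]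

theorem Int.exists_isCoprime_modEq {a b : ℤ} {N : ℕ} (h : Nat.gcd (Int.gcd a b) N = 1) :
    ∃ α β : ℤ, IsCoprime α β ∧ α ≡ a [ZMOD N] ∧ β ≡ b [ZMOD N] := by
  rcases eq_or_ne (Int.gcd a b) 0 with hd | hd
  · obtain rfl : N = 1 := by rwa [hd, Nat.gcd_zero_left] at h
    exact ⟨1, 0, isCoprime_one_left, Int.modEq_one, Int.modEq_one⟩
  obtain ⟨d, a', b', -, hab', rfl, rfl⟩ := Int.exists_gcd_one' (Nat.pos_of_ne_zero hd)
  obtain ⟨u, v, huv⟩ := Int.isCoprime_iff_gcd_eq_one.mpr hab'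
  obtain ⟨s, t, hst⟩ : IsCoprime (d : ℤ) N := by
    rw [Int.isCoprime_iff_gcd_eq_one, Int.gcd_natCast_natCast]
    simpa [Int.gcd_mul_right, hab'] using h
  -- `u α + v β = d` and `a' β - b' α = N`, and `d` is coprime to `N`.
  refine ⟨a' * d - v * N, b' * d + u * N, ⟨s * u - t * b', s * v + t * a', ?_⟩,
    Int.modEq_iff_dvd.mpr ⟨v, by ring⟩, Int.modEq_iff_dvd.mpr ⟨-u, by ring⟩⟩
  linear_combination (s * d + t * N) * huv + hst

theorem Nat.totient_mul_of_dvd {N m : ℕ} (h : N ∣ m) : φ (N * m) = N * φ m := by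
  rcases N.eq_zero_or_pos with rfl | hN
  · simp
  have key := Nat.totient_gcd_mul_totient_mul N m
  rw [Nat.gcd_eq_left h] at key
  exact Nat.eq_of_mul_eq_mul_left (Nat.totient_pos.mpr hN) (by rw [key]; ring)

theorem ZMod.card_ker_unitsMap_mul_totient {N m : ℕ} [NeZero m] (h : N ∣ m) :
    Nat.card (ZMod.unitsMap h).ker * φ N = φ m := by
  have : NeZero N := ⟨fun hN => NeZero.ne m (Nat.eq_zero_of_zero_dvd (hN ▸ h))⟩
  rw [← ZMod.card_units_eq_totient, ← ZMod.card_units_eq_totient, ← Nat.card_eq_fintype_card,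
    ← Nat.card_eq_fintype_card, ← (ZMod.unitsMap h).ker.card_mul_index, Subgroup.index_ker,
    (ZMod.unitsMap h).range_eq_top_of_surjective (ZMod.unitsMap_surjective h), Subgroup.card_top]

theorem Nat.card_eq_of_surjective_of_fibers {X Y Z : Type*} {f : X → Y} {g : X → Z}
    (hf : f.Surjective) (hg : g.Surjective) (h : ∀ x x', f x = f x' ↔ g x = g x') :
    Nat.card Y = Nat.card Z := by
  have hker : Setoid.ker f = Setoid.ker g := Setoid.ext h
  exact Nat.card_congr ((Setoid.quotientKerEquivOfSurjective f hf).symm.trans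
    (hker ▸ Setoid.quotientKerEquivOfSurjective g hg))

theorem eq_upper_det_of_col_zero {B : M₂} (h₀ : B 0 0 = 1) (h₁ : B 1 0 = 0) :
    B = !![1, B 0 1; 0, B.det] := by
  conv_lhs => rw [Matrix.eta_fin_two B]
  simp [Matrix.det_fin_two, h₀, h₁]

namespace Matrix.SpecialLinearGroup

theorem coe_inv_mul_cancel_left (g : SL(2, ℤ)) (A : M₂) :
    ((g⁻¹ : SL(2, ℤ)) : M₂) * ((g : M₂) * A) = A := by
  rw [← mul_assoc, ← coe_mul, inv_mul_cancel, coe_one, one_mul]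

theorem coe_mul_inv_cancel_left (g : SL(2, ℤ)) (A : M₂) :
    (g : M₂) * (((g⁻¹ : SL(2, ℤ)) : M₂) * A) = A := by
  simpa using coe_inv_mul_cancel_left g⁻¹ A

theorem exists_col_zero_modEq {v₀ : Fin 2 → ℤ} {N : ℕ}
    (hv₀ : Nat.gcd (Int.gcd (v₀ 0) (v₀ 1)) N = 1) :
    ∃ h : SL(2, ℤ), ∀ i, ((h : M₂) *ᵥ ![1, 0]) i ≡ v₀ i [ZMOD N] := by
  obtain ⟨α, β, hαβ, hα, hβ⟩ := Int.exists_isCoprime_modEq hv₀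
  obtain ⟨h, h0, h1⟩ := hαβ.exists_SL2_col 0
  refine ⟨h, Fin.forall_fin_two.mpr ⟨?_, ?_⟩⟩ <;> simpa [h0, h1]

theorem inv_mulVec_modEq {N : ℕ} {v w : Fin 2 → ℤ} {g : SL(2, ℤ)}
    (hg : ∀ i, ((g : M₂) *ᵥ v) i ≡ w i [ZMOD N]) (i : Fin 2) :
    (((g⁻¹ : SL(2, ℤ)) : M₂) *ᵥ w) i ≡ v i [ZMOD N] := by
  have hv : v = ((g⁻¹ : SL(2, ℤ)) : M₂) *ᵥ ((g : M₂) *ᵥ v) := by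
    rw [mulVec_mulVec, ← coe_mul, inv_mul_cancel, coe_one, one_mulVec]
  rw [hv]
  exact Int.ModEq.mulVec _ (fun j => (hg j).symm) i

end Matrix.SpecialLinearGroup

variable {N : ℕ} {n : ℤ} {v w : Fin 2 → ℤ}

theorem mulVec_modEq_of_mem_Gamma {γ : SL(2, ℤ)} (hγ : γ ∈ Gamma N) (v : Fin 2 → ℤ)
    (i : Fin 2) : ((γ : M₂) *ᵥ v) i ≡ v i [ZMOD N] := by
  obtain ⟨h₀₀, h₀₁, h₁₀, h₁₁⟩ := Gamma_mem.mp hγ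
  refine (ZMod.intCast_eq_intCast_iff _ _ N).mp ?_
  fin_cases i <;> simp [Matrix.mulVec, dotProduct, Fin.sum_univ_two, h₀₀, h₀₁, h₁₀, h₁₁]

theorem exists_Gamma_conj_mul_iff (g : SL(2, ℤ)) (A B : M₂) :
    (∃ γ ∈ Gamma N, (g : M₂) * B = γ * (g * A)) ↔ ∃ γ ∈ Gamma N, B = γ * A := by
  open Matrix.SpecialLinearGroup in
  constructor
  · rintro ⟨γ, hγ, h⟩
    refine ⟨g⁻¹ * γ * g, by simpa using (Gamma_normal N).conj_mem γ hγ g⁻¹, ?_⟩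
    rw [← coe_inv_mul_cancel_left g B, h]
    simp only [coe_mul, mul_assoc]
  · rintro ⟨γ, hγ, rfl⟩
    refine ⟨g * γ * g⁻¹, (Gamma_normal N).conj_mem γ hγ g, ?_⟩
    simp only [coe_mul, mul_assoc, coe_inv_mul_cancel_left]

theorem exists_Gamma_mulVec_eq {u : Fin 2 → ℤ} (hu : IsCoprime (u 0) (u 1))
    (hu₀ : u 0 ≡ 1 [ZMOD N]) (hu₁ : u 1 ≡ 0 [ZMOD N]) :
    ∃ γ ∈ Gamma N, (γ : M₂) *ᵥ u = ![1, 0] := by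
  obtain ⟨p, q, hpq⟩ := hu
  have hu₀' : (u 0 : ZMod N) = 1 := by simpa using (ZMod.intCast_eq_intCast_iff _ 1 N).mpr hu₀
  have hu₁' : (u 1 : ZMod N) = 0 := by simpa using (ZMod.intCast_eq_intCast_iff _ 0 N).mpr hu₁
  have hp : (p : ZMod N) = 1 := by simpa [hu₀', hu₁'] using congrArg (Int.cast : ℤ → ZMod N) hpq
  -- the first row `(p + q u₁, q (1 - u₀))` is another Bézout pair for `u`, chosen to be `≡ (1, 0)`
  refine ⟨⟨!![p + q * u 1, q * (1 - u 0); -u 1, u 0], ?_⟩, Gamma_mem.mpr ?_, ?_⟩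
  · rw [Matrix.det_fin_two_of]; linear_combination hpq
  · simp [hu₀', hu₁', hp]
  · have h₀ : (p + q * u 1) * u 0 + q * (1 - u 0) * u 1 = 1 := by linear_combination hpq
    ext i; fin_cases i
    · simpa [Matrix.mulVec, dotProduct, Fin.sum_univ_two] using h₀
    · simp [Matrix.mulVec, dotProduct, Fin.sum_univ_two, mul_comm]

theorem exists_Gamma_normalForm_iff {x y : ℤ} :
    (∃ γ ∈ Gamma N, !![1, y; 0, n] = (γ : M₂) * !![1, x; 0, n]) ↔ x ≡ y [ZMOD N * n] := by
  constructor
  · rintro ⟨γ, hγ, h⟩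
    have h₀₀ : (γ : M₂) 0 0 = 1 := by
      simpa [Matrix.mul_apply, Fin.sum_univ_two] using (congrFun (congrFun h 0) 0).symm
    have h₀₁ : y = γ 0 0 * x + γ 0 1 * n := by
      simpa [Matrix.mul_apply, Fin.sum_univ_two] using congrFun (congrFun h 0) 1
    obtain ⟨k, hk⟩ := (ZMod.intCast_zmod_eq_zero_iff_dvd _ N).mp (Gamma_mem.mp hγ).2.1
    exact Int.modEq_iff_dvd.mpr ⟨k, by rw [h₀₁, h₀₀, hk]; ring⟩
  · intro h
    obtain ⟨k, hk⟩ := Int.modEq_iff_dvd.mp h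
    obtain rfl : y = x + N * k * n := by linear_combination hk
    exact ⟨⟨!![1, N * k; 0, 1], by simp⟩, Gamma_mem.mpr (by simp), by simp⟩

theorem mul_mem_Dset {g : SL(2, ℤ)} (hg : ∀ i, ((g : M₂) *ᵥ v) i ≡ w i [ZMOD N]) {A : M₂}
    (hA : A ∈ Dset N v n) : (g : M₂) * A ∈ Dset N w n := by
  obtain ⟨hA₀, hA₁, hAv₀, hAv₁, hdet⟩ := hA
  have hcol (j i : Fin 2) : ((g : M₂) * A) i j = ((g : M₂) *ᵥ fun k => A k j) i := rfl
  refine ⟨?_, ?_, fun i => ?_, fun i => ?_, ?_⟩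
  · simpa only [hcol, ← Int.isCoprime_iff_gcd_eq_one] using
      (Int.isCoprime_iff_gcd_eq_one.mpr hA₀).mulVecSL g
  · simpa only [hcol, ← Int.isCoprime_iff_gcd_eq_one] using
      (Int.isCoprime_iff_gcd_eq_one.mpr hA₁).mulVecSL g
  · exact (Int.ModEq.mulVec _ hAv₀ i).trans (hg i)
  · exact (Int.ModEq.mulVec _ hAv₁ i).trans (hg i)
  · rw [Matrix.det_mul, g.det_coe, one_mul, hdet]

def Dset.mulLeftEquiv (g : SL(2, ℤ)) (hg : ∀ i, ((g : M₂) *ᵥ v) i ≡ w i [ZMOD N]) :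
    Dset N v n ≃ Dset N w n where
  toFun A := ⟨(g : M₂) * A, mul_mem_Dset hg A.2⟩
  invFun B := ⟨((g⁻¹ : SL(2, ℤ)) : M₂) * B,
    mul_mem_Dset (Matrix.SpecialLinearGroup.inv_mulVec_modEq hg) B.2⟩
  left_inv A := Subtype.ext (Matrix.SpecialLinearGroup.coe_inv_mul_cancel_left g A)
  right_inv B := Subtype.ext (Matrix.SpecialLinearGroup.coe_mul_inv_cancel_left g B)

def quotGammaRelEquiv (g : SL(2, ℤ)) (hg : ∀ i, ((g : M₂) *ᵥ v) i ≡ w i [ZMOD N]) :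
    Quot (gammaRel N v n) ≃ Quot (gammaRel N w n) :=
  Quot.congr (Dset.mulLeftEquiv g hg) fun A B => (exists_Gamma_conj_mul_iff g A B).symm

theorem gammaRel_equivalence : Equivalence (gammaRel N v n) where
  refl A := ⟨1, one_mem _, by simp⟩
  symm := by
    rintro A B ⟨γ, hγ, h⟩
    exact ⟨γ⁻¹, inv_mem hγ, by rw [h, Matrix.SpecialLinearGroup.coe_inv_mul_cancel_left]⟩
  trans := by
    rintro A B C ⟨γ, hγ, hB⟩ ⟨δ, hδ, hC⟩
    exact ⟨δ * γ, mul_mem hδ hγ, by rw [hC, hB, Matrix.SpecialLinearGroup.coe_mul, mul_assoc]⟩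

theorem exists_Gamma_mul_eq_normalForm {A : M₂} (hA : A ∈ Dset N ![1, 0] n) :
    ∃ γ ∈ Gamma N, ∃ x, (γ : M₂) * A = !![1, x; 0, n] := by
  obtain ⟨hA₀, -, hAv₀, -, hdet⟩ := hA
  obtain ⟨γ, hγ, hγA⟩ := exists_Gamma_mulVec_eq (u := fun i => A i 0)
    (Int.isCoprime_iff_gcd_eq_one.mpr hA₀) (by simpa using hAv₀ 0) (by simpa using hAv₀ 1)
  refine ⟨γ, hγ, ((γ : M₂) * A) 0 1,
    (eq_upper_det_of_col_zero (congrFun hγA 0) (congrFun hγA 1)).trans ?_⟩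
  rw [Matrix.det_mul, γ.det_coe, one_mul, hdet]

theorem normalForm_mem_Dset_iff (hNn : (N : ℤ) ∣ n) {x : ℤ} :
    !![1, x; 0, n] ∈ Dset N ![1, 0] n ↔ IsCoprime x n ∧ x ≡ 1 [ZMOD N] := by
  simp [Dset, Fin.forall_fin_two, Int.isCoprime_iff_gcd_eq_one, Matrix.det_fin_two_of,
    Int.modEq_zero_iff_dvd.mpr hNn]

abbrev NormalFormParam (N : ℕ) (n : ℤ) := {x : ℤ // IsCoprime x n ∧ x ≡ 1 [ZMOD N]}

def normalFormOrbit (hNn : (N : ℤ) ∣ n) (x : NormalFormParam N n) :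
    Quot (gammaRel N ![1, 0] n) :=
  Quot.mk _ ⟨!![1, x; 0, n], (normalForm_mem_Dset_iff hNn).mpr x.2⟩

theorem normalFormOrbit_surjective (hNn : (N : ℤ) ∣ n) : (normalFormOrbit hNn).Surjective := by
  rintro ⟨A, hA⟩
  obtain ⟨γ, hγ, x, hx⟩ := exists_Gamma_mul_eq_normalForm hA
  have hmem : !![1, x; 0, n] ∈ Dset N ![1, 0] n :=
    hx ▸ mul_mem_Dset (mulVec_modEq_of_mem_Gamma hγ _) hA
  exact ⟨⟨x, (normalForm_mem_Dset_iff hNn).mp hmem⟩, (Quot.sound ⟨γ, hγ, hx.symm⟩).symm⟩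

theorem normalFormOrbit_eq_iff (hNn : (N : ℤ) ∣ n) (x y : NormalFormParam N n) :
    normalFormOrbit hNn x = normalFormOrbit hNn y ↔ (x : ℤ) ≡ y [ZMOD N * n] := by
  rw [normalFormOrbit, normalFormOrbit, Quot.eq, gammaRel_equivalence.eqvGen_iff]
  exact exists_Gamma_normalForm_iff

def normalFormUnit (x : NormalFormParam N n) : (ZMod.unitsMap (dvd_mul_right N n.natAbs)).ker :=
  ⟨ZMod.unitOfIsCoprime x (Int.isCoprime_natCast_mul_natAbs_iff.mpr
    ⟨Int.isCoprime_of_modEq_one x.2.2, x.2.1⟩), by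
    rw [MonoidHom.mem_ker, Units.ext_iff, ZMod.unitsMap_val, ZMod.coe_unitOfIsCoprime,
      ZMod.cast_intCast (dvd_mul_right N n.natAbs), Units.val_one,
      (ZMod.intCast_eq_intCast_iff x 1 N).mpr x.2.2, Int.cast_one]⟩

theorem normalFormUnit_surjective [NeZero (N * n.natAbs)] :
    (normalFormUnit (N := N) (n := n)).Surjective := by
  rintro ⟨u, hu⟩
  set x : ℤ := ZMod.cast (u : ZMod (N * n.natAbs))
  have hxu : (x : ZMod (N * n.natAbs)) = u := ZMod.intCast_zmod_cast _
  have hcop : IsCoprime x N ∧ IsCoprime x n := by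
    rw [← Int.isCoprime_natCast_mul_natAbs_iff, isCoprime_comm,
      ← ZMod.coe_int_isUnit_iff_isCoprime, hxu]
    exact u.isUnit
  refine ⟨⟨x, hcop.2, (ZMod.intCast_eq_intCast_iff x 1 N).mp ?_⟩, Subtype.ext (Units.ext hxu)⟩
  rw [← ZMod.cast_intCast (dvd_mul_right N n.natAbs), hxu, Int.cast_one,
    ← ZMod.unitsMap_val (dvd_mul_right N n.natAbs), (MonoidHom.mem_ker).mp hu, Units.val_one]

theorem normalFormUnit_eq_iff (x y : NormalFormParam N n) :
    normalFormUnit x = normalFormUnit y ↔ (x : ℤ) ≡ y [ZMOD N * n] := by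
  rw [normalFormUnit, normalFormUnit, Subtype.mk.injEq, Units.ext_iff, ZMod.coe_unitOfIsCoprime,
    ZMod.coe_unitOfIsCoprime, ZMod.intCast_eq_intCast_iff, Nat.cast_mul, Int.natCast_natAbs]
  conv_rhs => rw [← Int.modEq_abs, abs_mul, Nat.abs_cast]

theorem stmt10_general (N : ℕ) (v₀ : Fin 2 → ℤ)
    (hv₀ : Nat.gcd (Int.gcd (v₀ 0) (v₀ 1)) N = 1)
    (n : ℤ) (hn : n ≠ 0) (hNn : (N : ℤ) ∣ n) :
    Nat.card (Quot (gammaRel N v₀ n)) * Nat.totient N = N * Nat.totient n.natAbs := by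
  obtain ⟨g, hg⟩ := Matrix.SpecialLinearGroup.exists_col_zero_modEq hv₀
  have : NeZero (N * n.natAbs) :=
    ⟨mul_ne_zero (by exact_mod_cast ne_zero_of_dvd_ne_zero hn hNn) (Int.natAbs_ne_zero.mpr hn)⟩
  have hcard : Nat.card (Quot (gammaRel N ![1, 0] n)) =
      Nat.card (ZMod.unitsMap (dvd_mul_right N n.natAbs)).ker :=
    Nat.card_eq_of_surjective_of_fibers (normalFormOrbit_surjective hNn) normalFormUnit_surjective
      fun x y => (normalFormOrbit_eq_iff hNn x y).trans (normalFormUnit_eq_iff x y).symm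
  rw [← Nat.card_congr (quotGammaRelEquiv g hg), hcard, ZMod.card_ker_unitsMap_mul_totient,
    Nat.totient_mul_of_dvd (Int.natCast_dvd.mp hNn)]

/-- For `N ≥ 2`, `gcd(v₀, N) = 1`, and `n` a nonzero multiple of `N`, the set `D_n`
decomposes into exactly `N·φ(n)/φ(N)` orbits under `Γ(N)`. -/
theorem stmt10 (N : ℕ) (hN : 2 ≤ N) (v₀ : Fin 2 → ℤ)
    (hv₀ : Nat.gcd (Int.gcd (v₀ 0) (v₀ 1)) N = 1)
    (n : ℤ) (hn : n ≠ 0) (hNn : (N : ℤ) ∣ n) :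
    Nat.card (Quot (gammaRel N v₀ n)) * Nat.totient N = N * Nat.totient n.natAbs :=
  stmt10_general N v₀ hv₀ n hn hNn
end

section
/- Let N = 2 and let σ₁, σ₂ be congruence classes of primitive vectors mod 2 (i.e., elements of {(0,1),(1,0),(1,1)}). For a nonzero integer n, there exist primitive vectors v₁ ≡ σ₁ (mod 2) and v₂ ≡ σ₂ (mod 2) with det(v₁,v₂) = n if and only if: σ₁ = σ₂ when n is even (nonzero), and σ₁ ≠ σ₂ when n is odd. -/
/-!
Reduction mod 2 turns `det(v₁, v₂)` into the determinant of two nonzero vectors of `𝔽₂²`,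
which vanishes exactly when they are equal; this forces the parity condition. Conversely,
complete `σ₁` to a basis `(σ₁, w)` of `ℤ²`; for odd `n` this can be done with `w ≡ σ₂`, because
distinct representatives `σ₁ ≠ σ₂` have determinant `±1`. Then `v₂ = (n + 1) σ₁ + n w` is
primitive, its coordinates `(n + 1, n)` in that basis being coprime, satisfies
`det(σ₁, v₂) = n`, and is congruent to `σ₁` or to `w` mod 2 according to the parity of `n`.
-/

def det₂ {R : Type*} [CommRing R] (v w : Fin 2 → R) : R := v 0 * w 1 - v 1 * w 0

section CommRing

variable {R : Type*} [CommRing R]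

@[simp]
lemma det₂_self (v : Fin 2 → R) : det₂ v v = 0 := by
  unfold det₂; ring

lemma det₂_smul_add_smul_right (a b : R) (u w : Fin 2 → R) :
    det₂ u (a • u + b • w) = b * det₂ u w := by
  simp only [det₂, Pi.add_apply, Pi.smul_apply, smul_eq_mul]; ring

lemma det₂_smul_right (a : R) (u w : Fin 2 → R) : det₂ u (a • w) = a * det₂ u w := by
  simp only [det₂, Pi.smul_apply, smul_eq_mul]; ring

lemma det₂_smul_add_smul_left (a b : R) (u w : Fin 2 → R) :
    det₂ (a • u + b • w) w = a * det₂ u w := by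
  simp only [det₂, Pi.add_apply, Pi.smul_apply, smul_eq_mul]; ring

lemma IsCoprime.of_det₂ {u v w : Fin 2 → R} (h : IsCoprime (det₂ u v) (det₂ v w)) :
    IsCoprime (v 0) (v 1) := by
  obtain ⟨a, b, hab⟩ := h
  exact ⟨b * w 1 - a * u 1, a * u 0 - b * w 0, by rw [← hab]; unfold det₂; ring⟩

lemma exists_det₂_eq_one {u : Fin 2 → R} (hu : IsCoprime (u 0) (u 1)) :
    ∃ w : Fin 2 → R, det₂ u w = 1 := by
  obtain ⟨a, b, hab⟩ := hu
  exact ⟨![-b, a], by rw [← hab]; simp [det₂]; ring⟩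

lemma isCoprime_smul_add_smul {u w : Fin 2 → R} (huw : det₂ u w = 1) {a b : R}
    (hab : IsCoprime a b) : IsCoprime ((a • u + b • w) 0) ((a • u + b • w) 1) :=
  IsCoprime.of_det₂ (u := u) (w := w) <| by
    rwa [det₂_smul_add_smul_left, det₂_smul_add_smul_right, huw, mul_one, mul_one,
      isCoprime_comm]

end CommRing

lemma det₂_modEq {m : ℤ} {v v' w w' : Fin 2 → ℤ} (hv : ∀ i, v i ≡ v' i [ZMOD m])
    (hw : ∀ i, w i ≡ w' i [ZMOD m]) : det₂ v w ≡ det₂ v' w' [ZMOD m] :=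
  ((hv 0).mul (hw 1)).sub ((hv 1).mul (hw 0))

def primitiveResidueReps : Set (Fin 2 → ℤ) := {![0, 1], ![1, 0], ![1, 1]}

lemma isCoprime_of_mem_primitiveResidueReps {σ : Fin 2 → ℤ} (hσ : σ ∈ primitiveResidueReps) :
    IsCoprime (σ 0) (σ 1) := by
  rcases hσ with rfl | rfl | rfl <;> simp [isCoprime_one_left, isCoprime_one_right]

lemma isUnit_det₂_of_mem_primitiveResidueReps {σ τ : Fin 2 → ℤ}
    (hσ : σ ∈ primitiveResidueReps) (hτ : τ ∈ primitiveResidueReps) (hne : σ ≠ τ) :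
    IsUnit (det₂ σ τ) := by
  rcases hσ with rfl | rfl | rfl <;> rcases hτ with rfl | rfl | rfl <;> simp_all [det₂]

lemma two_dvd_det₂_iff {σ τ : Fin 2 → ℤ} (hσ : σ ∈ primitiveResidueReps)
    (hτ : τ ∈ primitiveResidueReps) : 2 ∣ det₂ σ τ ↔ σ = τ := by
  refine ⟨fun h2 => by_contra fun hne => ?_, by rintro rfl; simp⟩
  rcases Int.isUnit_iff.mp (isUnit_det₂_of_mem_primitiveResidueReps hσ hτ hne) with h | h <;>
    rw [h] at h2 <;> norm_num at h2

lemma exists_det₂_eq_one_modEq_two {σ τ : Fin 2 → ℤ} (hσ : σ ∈ primitiveResidueReps)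
    (hτ : τ ∈ primitiveResidueReps) (hne : σ ≠ τ) :
    ∃ w : Fin 2 → ℤ, det₂ σ w = 1 ∧ ∀ i, w i ≡ τ i [ZMOD 2] := by
  have hunit := isUnit_det₂_of_mem_primitiveResidueReps hσ hτ hne
  refine ⟨det₂ σ τ • τ, ?_, fun i => ?_⟩
  · rw [det₂_smul_right, Int.isUnit_mul_self hunit]
  · rcases Int.isUnit_iff.mp hunit with h | h <;> rw [h]
    · simp [Int.ModEq.refl]
    · simp [Int.ModEq, Int.neg_emod_two]

lemma smul_add_smul_modEq_two (n : ℤ) (u w : Fin 2 → ℤ) (i : Fin 2) :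
    ((n + 1) • u + n • w) i ≡ if 2 ∣ n then u i else w i [ZMOD 2] := by
  simp only [Pi.add_apply, Pi.smul_apply, smul_eq_mul, Int.modEq_iff_dvd]
  split_ifs with h
  · obtain ⟨m, rfl⟩ := h
    exact ⟨-m * (u i + w i), by ring⟩
  · obtain ⟨m, rfl⟩ : ∃ m, n = 2 * m + 1 := ⟨n / 2, by omega⟩
    exact ⟨-(m + 1) * u i - m * w i, by ring⟩

lemma two_dvd_iff_of_det₂_eq {σ₁ σ₂ v₁ v₂ : Fin 2 → ℤ} {n : ℤ}
    (h1 : σ₁ ∈ primitiveResidueReps) (h2 : σ₂ ∈ primitiveResidueReps)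
    (hv₁ : ∀ i, v₁ i ≡ σ₁ i [ZMOD 2]) (hv₂ : ∀ i, v₂ i ≡ σ₂ i [ZMOD 2])
    (hdet : det₂ v₁ v₂ = n) :
    2 ∣ n ↔ σ₁ = σ₂ := by
  rw [← two_dvd_det₂_iff h1 h2, ← hdet]
  exact (det₂_modEq hv₁ hv₂).dvd_iff

lemma exists_isCoprime_det₂_eq {σ₁ σ₂ : Fin 2 → ℤ} {n : ℤ}
    (h1 : σ₁ ∈ primitiveResidueReps) (h2 : σ₂ ∈ primitiveResidueReps)
    (hparity : 2 ∣ n ↔ σ₁ = σ₂) :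
    ∃ v₁ v₂ : Fin 2 → ℤ, IsCoprime (v₁ 0) (v₁ 1) ∧ IsCoprime (v₂ 0) (v₂ 1) ∧
      (∀ i, v₁ i ≡ σ₁ i [ZMOD 2]) ∧ (∀ i, v₂ i ≡ σ₂ i [ZMOD 2]) ∧ det₂ v₁ v₂ = n := by
  obtain ⟨w, hw, hwσ₂⟩ : ∃ w, det₂ σ₁ w = 1 ∧ (¬ 2 ∣ n → ∀ i, w i ≡ σ₂ i [ZMOD 2]) := by
    by_cases hn : 2 ∣ n
    · obtain ⟨w, hw⟩ := exists_det₂_eq_one (isCoprime_of_mem_primitiveResidueReps h1)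
      exact ⟨w, hw, absurd hn⟩
    · obtain ⟨w, hw, hwσ₂⟩ := exists_det₂_eq_one_modEq_two h1 h2 (hparity.not.mp hn)
      exact ⟨w, hw, fun _ => hwσ₂⟩
  refine ⟨σ₁, (n + 1) • σ₁ + n • w, isCoprime_of_mem_primitiveResidueReps h1,
    isCoprime_smul_add_smul hw ⟨1, -1, by ring⟩, fun _ => Int.ModEq.refl _, fun i => ?_,
    by rw [det₂_smul_add_smul_right, hw, mul_one]⟩
  refine (smul_add_smul_modEq_two n σ₁ w i).trans ?_
  split_ifs with hn
  · rw [hparity.mp hn]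
  · exact hwσ₂ hn i

theorem stmt11_general (σ₁ σ₂ : Fin 2 → ℤ)
    (h1 : σ₁ ∈ ({![0, 1], ![1, 0], ![1, 1]} : Set (Fin 2 → ℤ)))
    (h2 : σ₂ ∈ ({![0, 1], ![1, 0], ![1, 1]} : Set (Fin 2 → ℤ)))
    (n : ℤ) :
    (∃ v₁ v₂ : Fin 2 → ℤ,
        Int.gcd (v₁ 0) (v₁ 1) = 1 ∧ Int.gcd (v₂ 0) (v₂ 1) = 1 ∧
        (∀ i, v₁ i ≡ σ₁ i [ZMOD 2]) ∧ (∀ i, v₂ i ≡ σ₂ i [ZMOD 2]) ∧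
        v₁ 0 * v₂ 1 - v₁ 1 * v₂ 0 = n)
      ↔ ((2 ∣ n ∧ σ₁ = σ₂) ∨ (¬ 2 ∣ n ∧ σ₁ ≠ σ₂)) := by
  simp only [← Int.isCoprime_iff_gcd_eq_one]
  change (∃ v₁ v₂, _ ∧ _ ∧ _ ∧ _ ∧ det₂ v₁ v₂ = n) ↔ _
  refine (Iff.intro
    (fun ⟨_, _, _, _, hv₁, hv₂, hdet⟩ => two_dvd_iff_of_det₂_eq h1 h2 hv₁ hv₂ hdet)
    (exists_isCoprime_det₂_eq h1 h2)).trans ?_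
  tauto

/-- For congruence classes `σ₁, σ₂ ∈ {(0,1),(1,0),(1,1)}` of primitive vectors mod 2 and
nonzero `n`, there exist primitive `v₁ ≡ σ₁`, `v₂ ≡ σ₂ (mod 2)` with `det(v₁,v₂) = n`
iff `σ₁ = σ₂` when `n` is even and `σ₁ ≠ σ₂` when `n` is odd. -/
theorem stmt11 (σ₁ σ₂ : Fin 2 → ℤ)
    (h1 : σ₁ ∈ ({![0, 1], ![1, 0], ![1, 1]} : Set (Fin 2 → ℤ)))
    (h2 : σ₂ ∈ ({![0, 1], ![1, 0], ![1, 1]} : Set (Fin 2 → ℤ)))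
    (n : ℤ) (hn : n ≠ 0) :
    (∃ v₁ v₂ : Fin 2 → ℤ,
        Int.gcd (v₁ 0) (v₁ 1) = 1 ∧ Int.gcd (v₂ 0) (v₂ 1) = 1 ∧
        (∀ i, v₁ i ≡ σ₁ i [ZMOD 2]) ∧ (∀ i, v₂ i ≡ σ₂ i [ZMOD 2]) ∧
        v₁ 0 * v₂ 1 - v₁ 1 * v₂ 0 = n)
      ↔ ((2 ∣ n ∧ σ₁ = σ₂) ∨ (¬ 2 ∣ n ∧ σ₁ ≠ σ₂)) :=
  stmt11_general σ₁ σ₂ h1 h2 n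
end

section
/- Let N ≥ 1, m ≥ 1, d = gcd(N, m) with 1 < d < m, and m' = m/d. The map ψ sending ℓ ∈ S_N(m) = {1 ≤ ℓ ≤ Nm : ℓ ≡ 1 (mod N), gcd(ℓ, m) = 1} to its residue in S_d(m') = {1 ≤ u ≤ dm' : u ≡ 1 (mod d), gcd(u, m') = 1} given by reduction modulo m = dm' is a well-defined surjective d-to-1 map; in particular |S_N(m)| = d·|S_d(m')|. -/
/-! Reducing `ℓ ∈ S_N(m)` modulo `m = d m'` keeps `ℓ ≡ 1 (mod d)` and coprimality, and a residue
is `0` only if `m = 1`. For the fibres: by the non-coprime Chinese remainder theorem the conditions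
`ℓ ≡ 1 (mod N)`, `ℓ ≡ u (mod m)` (compatible because `u ≡ 1 (mod d)`) cut out one residue class
modulo `lcm(N, m)`, and `[1, Nm]` consists of exactly `d = Nm / lcm(N, m)` full periods. -/

/-- `S_N(m) = {1 ≤ ℓ ≤ Nm : ℓ ≡ 1 (mod N), gcd(ℓ, m) = 1}`. -/
def SNm' (N m : ℕ) : Finset ℕ :=
  (Finset.Icc 1 (N * m)).filter (fun ℓ => ℓ ≡ 1 [MOD N] ∧ Nat.gcd ℓ m = 1)

open Finset

namespace Nat

theorem card_filter_Icc_modEq (k L c : ℕ) (hL : 0 < L) :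
    #{ℓ ∈ Icc 1 (k * L) | ℓ ≡ c [MOD L]} = k := by
  have hperiodic : Function.Periodic (· ≡ c [MOD L]) (k * L) := fun ℓ => by
    simp only [ModEq, add_mul_mod_self_right]
  rw [← Ico_add_one_right_eq_Icc, add_comm, filter_Ico_card_eq_of_periodic _ _ _ hperiodic,
    count_modEq_card _ hL]
  simp [Nat.mul_div_cancel _ hL]

theorem modEq_lcm_iff_of_modEq {N m a b c : ℕ} (hcN : c ≡ a [MOD N]) (hcm : c ≡ b [MOD m])
    (ℓ : ℕ) : ℓ ≡ c [MOD lcm N m] ↔ ℓ ≡ a [MOD N] ∧ ℓ ≡ b [MOD m] := by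
  refine ⟨fun h => ⟨?_, ?_⟩, fun ⟨hN, hm⟩ => mod_lcm (hN.trans hcN.symm) (hm.trans hcm.symm)⟩
  · exact (h.of_dvd (dvd_lcm_left N m)).trans hcN
  · exact (h.of_dvd (dvd_lcm_right N m)).trans hcm

end Nat

open Nat

theorem coprime_of_mem_SNm' {d m' u : ℕ} (hu : u ∈ SNm' d m') : Coprime u (d * m') := by
  simp only [SNm', mem_filter] at hu
  have hud : Coprime u d := by
    rw [Coprime, hu.2.1.gcd_eq, Nat.gcd_one_left]
  exact hud.mul_right hu.2.2

theorem lt_of_mem_SNm' {d m' u : ℕ} (hu : u ∈ SNm' d m') (h : 1 < d * m') : u < d * m' := by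
  have hle : u ≤ d * m' := (mem_Icc.mp (mem_filter.mp hu).1).2
  refine hle.lt_of_ne fun heq => ?_
  have := coprime_of_mem_SNm' hu
  rw [heq, coprime_self] at this
  omega

theorem mod_mem_SNm' {N m d ℓ : ℕ} (hdN : d ∣ N) (hdm : d ∣ m) (hm : 1 < m)
    (hℓ : ℓ ∈ SNm' N m) : ℓ % m ∈ SNm' d (m / d) := by
  simp only [SNm', mem_filter, mem_Icc] at hℓ ⊢
  obtain ⟨-, hℓN, hℓm⟩ := hℓ
  have hcop : Coprime (ℓ % m) m := by rwa [Coprime, ← gcd_rec, Nat.gcd_comm]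
  have hne : ℓ % m ≠ 0 := fun h0 => by
    rw [h0, Coprime, Nat.gcd_zero_left] at hcop
    omega
  refine ⟨⟨by omega, ?_⟩, ?_, hcop.coprime_dvd_right (div_dvd_of_dvd hdm)⟩
  · rw [Nat.mul_div_cancel' hdm]
    exact (mod_lt ℓ (by omega)).le
  · exact ((mod_modEq ℓ m).of_dvd hdm).trans (hℓN.of_dvd hdN)

theorem card_filter_SNm'_mod_eq {N m u : ℕ} (hN : N ≠ 0) (hm : m ≠ 0)
    (hu : u ≡ 1 [MOD Nat.gcd N m]) (hum : Coprime u m) :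
    #{ℓ ∈ SNm' N m | ℓ % m = u % m} = Nat.gcd N m := by
  obtain ⟨c, hcN, hcm⟩ := chineseRemainder' hu.symm
  have hfiber : {ℓ ∈ SNm' N m | ℓ % m = u % m} =
      {ℓ ∈ Icc 1 (Nat.gcd N m * Nat.lcm N m) | ℓ ≡ c [MOD Nat.lcm N m]} := by
    ext ℓ
    simp only [SNm', mem_filter, Nat.gcd_mul_lcm, modEq_lcm_iff_of_modEq hcN hcm, and_assoc]
    refine and_congr_right fun _ => and_congr_right fun _ => ⟨fun h => h.2, fun h => ⟨?_, h⟩⟩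
    rw [h.gcd_eq]
    exact hum
  rw [hfiber, card_filter_Icc_modEq _ _ _ (Nat.pos_of_ne_zero (lcm_ne_zero hN hm))]

theorem stmt17_general (N m d m' : ℕ)
    (hd : d = Nat.gcd N m) (hdm : d < m) (hm' : m' = m / d) :
    (∀ ℓ ∈ SNm' N m, ℓ % m ∈ SNm' d m') ∧
    (∀ u ∈ SNm' d m', ((SNm' N m).filter (fun ℓ => ℓ % m = u % m)).card = d) ∧
    (SNm' N m).card = d * (SNm' d m').card := by
  subst hd hm'
  have hN : N ≠ 0 := by rintro rfl; simp at hdm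
  have hm : 1 < m := lt_of_le_of_lt (Nat.gcd_pos_of_pos_left m (Nat.pos_of_ne_zero hN)) hdm
  have hm_eq : Nat.gcd N m * (m / Nat.gcd N m) = m := Nat.mul_div_cancel' (Nat.gcd_dvd_right N m)
  have hreduce (ℓ) (hℓ : ℓ ∈ SNm' N m) : ℓ % m ∈ SNm' (Nat.gcd N m) (m / Nat.gcd N m) :=
    mod_mem_SNm' (Nat.gcd_dvd_left N m) (Nat.gcd_dvd_right N m) hm hℓ
  have hfiber (u) (hu : u ∈ SNm' (Nat.gcd N m) (m / Nat.gcd N m)) :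
      #{ℓ ∈ SNm' N m | ℓ % m = u % m} = Nat.gcd N m :=
    card_filter_SNm'_mod_eq hN (by omega) (mem_filter.mp hu).2.1
      (hm_eq ▸ coprime_of_mem_SNm' hu)
  refine ⟨hreduce, hfiber, ?_⟩
  rw [card_eq_sum_card_fiberwise hreduce, mul_comm, ← smul_eq_mul, ← sum_const]
  refine sum_congr rfl fun u hu => ?_
  have hu_lt : u < m := hm_eq ▸ lt_of_mem_SNm' hu (by rwa [hm_eq])
  rw [← hfiber u hu, Nat.mod_eq_of_lt hu_lt]

/-- With `d = gcd(N,m)`, `1 < d < m`, `m' = m/d`, reduction mod `m` is a well-defined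
surjective `d`-to-1 map from `S_N(m)` onto `S_d(m')`; in particular
`|S_N(m)| = d·|S_d(m')|`. -/
theorem stmt17 (N m d m' : ℕ) (hN : 1 ≤ N) (hm : 1 ≤ m)
    (hd : d = Nat.gcd N m) (hd1 : 1 < d) (hdm : d < m) (hm' : m' = m / d) :
    (∀ ℓ ∈ SNm' N m, ℓ % m ∈ SNm' d m') ∧
    (∀ u ∈ SNm' d m', ((SNm' N m).filter (fun ℓ => ℓ % m = u % m)).card = d) ∧
    (SNm' N m).card = d * (SNm' d m').card :=
  stmt17_general N m d m' hd hdm hm'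
end
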